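/- (t-SVD) Every third-order complex tensor X of size n1 × n2 × n3 admits a decomposition X = U ∗ S ∗ V^H, where U is an n1 × n1 × n3 orthogonal tensor, V is an n2 × n2 × n3 orthogonal tensor, and S is an n1 × n2 × n3 f-diagonal tensor whose frontal slices in the Fourier domain have nonnegative real diagonal entries. -/

import Mathlib

open Matrix
open scoped BigOperators ComplexConjugate

noncomputable section

/-- Circular convolution of two vectors of length `n`, indexed by `ZMod n`. -/
def cconv {n : ℕ} [NeZero n] (a b : ZMod n → ℂ) : ZMod n → ℂ :=
  fun k => ∑ t : ZMod n, a t * b (k - t)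

/-- Unnormalized discrete Fourier transform with ω = exp(-2πi/n):
`dft x k = ∑ t, x t * ω ^ (k*t)`. -/
def dft {n : ℕ} [NeZero n] (x : ZMod n → ℂ) : ZMod n → ℂ :=
  fun k => ∑ t : ZMod n, x t * Complex.exp (-(2 * Real.pi * Complex.I) / n) ^ (k * t).val

/-- A third-order complex tensor of size n1 × n2 × n3 (third index taken modulo n3). -/
abbrev Tensor (n1 n2 n3 : ℕ) := Fin n1 → Fin n2 → ZMod n3 → ℂ

/-- The t-product: the (i,j)-th mode-3 tube of `A ∗ B` is `∑ k, A(i,k,·) ⋆ B(k,j,·)`. -/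
def tProd {n1 n2 n4 n3 : ℕ} [NeZero n3] (A : Tensor n1 n2 n3) (B : Tensor n2 n4 n3) :
    Tensor n1 n4 n3 :=
  fun i j => ∑ k : Fin n2, cconv (A i k) (B k j)

/-- Mode-3 DFT: apply the DFT to every mode-3 tube. -/
def mdft {n1 n2 n3 : ℕ} [NeZero n3] (X : Tensor n1 n2 n3) : Tensor n1 n2 n3 :=
  fun i j => dft (X i j)

/-- The k-th frontal fslice of a tensor, as a matrix. -/
def fslice {n1 n2 n3 : ℕ} (X : Tensor n1 n2 n3) (k : ZMod n3) : Matrix (Fin n1) (Fin n2) ℂ :=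
  Matrix.of fun i j => X i j k

/-- Conjugate transpose of a tensor: conjugate-transpose each frontal fslice and reverse
the order of the transposed slices 2 through n3, i.e. `Xᴴ(i,j,t) = conj (X j i (-t))`. -/
def tconj {n1 n2 n3 : ℕ} (X : Tensor n1 n2 n3) : Tensor n2 n1 n3 :=
  fun i j t => (starRingEnd ℂ) (X j i (-t))

/-- The identity tensor: first frontal fslice is the identity matrix, others are zero. -/
def tId (n n3 : ℕ) : Tensor n n n3 :=
  fun i j t => if t = 0 ∧ i = j then 1 else 0

/-- A tensor `Q` is orthogonal if `Q ∗ Qᴴ = Qᴴ ∗ Q = I`. -/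
def TOrthogonal {n n3 : ℕ} [NeZero n3] (Q : Tensor n n n3) : Prop :=
  tProd Q (tconj Q) = tId n n3 ∧ tProd (tconj Q) Q = tId n n3

/-- A tensor is f-diagonal if each of its frontal slices is a diagonal matrix. -/
def FDiagonal {n1 n2 n3 : ℕ} (S : Tensor n1 n2 n3) : Prop :=
  ∀ (i : Fin n1) (j : Fin n2) (k : ZMod n3), (i : ℕ) ≠ (j : ℕ) → S i j k = 0

/-- Frobenius norm of a tensor. -/
def frob {n1 n2 n3 : ℕ} [NeZero n3] (X : Tensor n1 n2 n3) : ℝ :=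
  Real.sqrt (∑ i : Fin n1, ∑ j : Fin n2, ∑ t : ZMod n3, ‖X i j t‖ ^ 2)

/-- Frobenius norm of a matrix. -/
def frobM {m n : ℕ} (M : Matrix (Fin m) (Fin n) ℂ) : ℝ :=
  Real.sqrt (∑ i : Fin m, ∑ j : Fin n, ‖M i j‖ ^ 2)

/-- Nuclear norm of a matrix: the sum of its singular values,
i.e. of the square roots of the eigenvalues of `Mᴴ * M`. -/
def nuclearNorm {m n : ℕ} (M : Matrix (Fin m) (Fin n) ℂ) : ℝ :=
  ∑ j : Fin n, Real.sqrt ((Matrix.isHermitian_conjTranspose_mul_self M).eigenvalues j)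

/-- The tensor nuclear norm: sum of the nuclear norms of the Fourier-domain frontal slices. -/
def tnn {n1 n2 n3 : ℕ} [NeZero n3] (X : Tensor n1 n2 n3) : ℝ :=
  ∑ k : ZMod n3, nuclearNorm (fslice (mdft X) k)

/-!
The mode-3 DFT is a bijection on tensors that turns the t-product into frontal-slice-wise matrix
multiplication (convolution theorem), the tensor conjugate transpose into slice-wise conjugate
transposition, and the identity tensor into identity slices. Hence a t-SVD is obtained by taking
a matrix SVD `Û_k Σ_k V̂_kᴴ` of every Fourier-domain frontal slice of `X` and transforming `Û`,
`Σ`, `V̂` back. The matrix SVD comes from an orthonormal eigenbasis `e` of `Tᴴ T`: the vectors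
`T e_j / σ_j` with `σ_j ≠ 0` are orthonormal, and they extend to an orthonormal basis.
-/

open Module
open scoped ZMod

namespace ZMod

variable {n : ℕ} [NeZero n]

theorem stdAddChar_neg_eq_conj (a : ZMod n) : stdAddChar (-a) = conj (stdAddChar a) := by
  rw [AddChar.starComp_apply (by simp [ZMod.ringChar_zmod_n, Nat.pos_of_neZero]),
    AddChar.inv_apply]

theorem dft_cconv (a b : ZMod n → ℂ) : 𝓕 (cconv a b) = 𝓕 a * 𝓕 b := by
  ext k
  simp only [dft_apply, cconv, Pi.mul_apply, smul_eq_mul]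
  rw [Finset.sum_mul_sum]
  simp only [Finset.mul_sum]
  rw [Finset.sum_comm]
  refine Finset.sum_congr rfl fun t _ => ?_
  rw [← Equiv.sum_comp (Equiv.addRight t)]
  refine Finset.sum_congr rfl fun s _ => ?_
  simp only [Equiv.coe_addRight, add_sub_cancel_right, add_mul, neg_add, AddChar.map_add_eq_mul]
  ring

theorem dft_conj_neg (x : ZMod n → ℂ) : 𝓕 (fun t => conj (x (-t))) = fun k => conj (𝓕 x k) := by
  ext k
  simp only [dft_apply, smul_eq_mul, map_sum, map_mul, ← stdAddChar_neg_eq_conj]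
  rw [← Equiv.sum_comp (Equiv.neg _)]
  simp

theorem dft_single_zero {E : Type*} [AddCommGroup E] [Module ℂ E] (c : E) :
    𝓕 (Pi.single (0 : ZMod n) c) = fun _ => c := by
  ext k
  simp [dft_apply, Pi.single_apply]

end ZMod

namespace LinearMap

variable {𝕜 E F : Type*} [RCLike 𝕜]
  [NormedAddCommGroup E] [InnerProductSpace 𝕜 E] [FiniteDimensional 𝕜 E]
  [NormedAddCommGroup F] [InnerProductSpace 𝕜 F] [FiniteDimensional 𝕜 F]
  {n m : ℕ}

theorem inner_apply_eigenvectorBasis_adjoint_comp_self (T : E →ₗ[𝕜] F) (hn : finrank 𝕜 E = n)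
    (i j : Fin n) :
    inner 𝕜 (T (T.isSymmetric_adjoint_comp_self.eigenvectorBasis hn i))
        (T (T.isSymmetric_adjoint_comp_self.eigenvectorBasis hn j)) =
      if i = j then ((T.singularValues i ^ 2 : ℝ) : 𝕜) else 0 := by
  rw [← adjoint_inner_right, ← comp_apply, IsSymmetric.apply_eigenvectorBasis, inner_smul_right,
    orthonormal_iff_ite.mp (OrthonormalBasis.orthonormal _), T.sq_singularValues_fin hn]
  split_ifs with h <;> simp [h]

theorem apply_eigenvectorBasis_adjoint_comp_self_eq_zero (T : E →ₗ[𝕜] F) (hn : finrank 𝕜 E = n)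
    {i : Fin n} (hi : T.singularValues i = 0) :
    T (T.isSymmetric_adjoint_comp_self.eigenvectorBasis hn i) = 0 := by
  rw [← inner_self_eq_zero (𝕜 := 𝕜), T.inner_apply_eigenvectorBasis_adjoint_comp_self hn]
  simp [hi]

theorem lt_finrank_of_singularValues_ne_zero (T : E →ₗ[𝕜] F) {i : ℕ}
    (hi : T.singularValues i ≠ 0) : i < finrank 𝕜 E ∧ i < finrank 𝕜 F := by
  refine ⟨lt_of_not_ge fun h => hi (T.singularValues_of_finrank_le h), ?_⟩
  rw [← singularValues_pos_iff_ne_zero, singularValues_pos_iff_lt_finrank_range] at hi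
  exact hi.trans_le (Submodule.finrank_le _)

theorem exists_orthonormalBasis_inner_apply_eq_singularValues (T : E →ₗ[𝕜] F)
    (hn : finrank 𝕜 E = n) (hm : finrank 𝕜 F = m) :
    ∃ (e : OrthonormalBasis (Fin n) 𝕜 E) (u : OrthonormalBasis (Fin m) 𝕜 F), ∀ i j,
      inner 𝕜 (u i) (T (e j)) = if (i : ℕ) = j then (T.singularValues j : 𝕜) else 0 := by
  set e := T.isSymmetric_adjoint_comp_self.eigenvectorBasis hn
  set σ := T.singularValues
  have hinner : ∀ i j, inner 𝕜 (T (e i)) (T (e j)) = if i = j then ((σ i ^ 2 : ℝ) : 𝕜) else 0 :=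
    T.inner_apply_eigenvectorBasis_adjoint_comp_self hn
  -- `σ j ≠ 0` forces `j < n` and `j < m`, so the normalized images `(σ j)⁻¹ • T (e j)`
  -- can be indexed by a subset of `Fin m`
  let v : Fin m → F := fun j =>
    if h : (j : ℕ) < n then ((σ j : 𝕜)⁻¹) • T (e ⟨j, h⟩) else 0
  have hv : Orthonormal 𝕜 (({j | σ j ≠ 0} : Set (Fin m)).domRestrict v) := by
    rw [orthonormal_iff_ite]
    rintro ⟨a, ha⟩ ⟨b, hb⟩
    have ha' : (a : ℕ) < n := hn ▸ (T.lt_finrank_of_singularValues_ne_zero ha).1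
    have hb' : (b : ℕ) < n := hn ▸ (T.lt_finrank_of_singularValues_ne_zero hb).1
    simp only [Set.domRestrict_apply, v, dif_pos ha', dif_pos hb', inner_smul_left,
      inner_smul_right, hinner, Fin.mk.injEq, Subtype.mk.injEq, Fin.val_inj]
    split_ifs with hab
    · subst hab
      have : (σ a : 𝕜) ≠ 0 := RCLike.ofReal_ne_zero.mpr ha
      simp only [RCLike.conj_ofReal, map_inv₀, RCLike.ofReal_pow]
      field_simp
    · simp
  obtain ⟨u, hu⟩ := hv.exists_orthonormalBasis_extension_of_card_eq (by simp [hm])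
  refine ⟨e, u, fun j i => ?_⟩
  by_cases hi : σ i = 0
  · have hTe : T (e i) = 0 := T.apply_eigenvectorBasis_adjoint_comp_self_eq_zero hn hi
    simp [hTe, hi]
  have him : (i : ℕ) < m := hm ▸ (T.lt_finrank_of_singularValues_ne_zero hi).2
  have hTe : T (e i) = (σ i : 𝕜) • u ⟨i, him⟩ := by
    rw [hu _ hi]
    simp [v, smul_inv_smul₀ (RCLike.ofReal_ne_zero (K := 𝕜) |>.mpr hi)]
  rw [hTe, inner_smul_right, orthonormal_iff_ite.mp u.orthonormal]
  simp [Fin.ext_iff]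

end LinearMap

namespace Matrix

variable {𝕜 : Type*} [RCLike 𝕜] {m p : ℕ}

def rectDiagonal {α : Type*} [Zero α] (d : Fin p → α) : Matrix (Fin m) (Fin p) α :=
  of fun i j => if (i : ℕ) = j then d j else 0

-- With `m` left implicit, `U * rectDiagonal d` elaborates through `CStarMatrix` and fails.
theorem exists_svd (M : Matrix (Fin m) (Fin p) 𝕜) :
    ∃ U ∈ unitaryGroup (Fin m) 𝕜, ∃ V ∈ unitaryGroup (Fin p) 𝕜,
      M = U * rectDiagonal (m := m) (fun j : Fin p => ((toEuclideanLin M).singularValues j : 𝕜)) *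
        star V := by
  obtain ⟨e, u, hT⟩ := (toEuclideanLin M).exists_orthonormalBasis_inner_apply_eq_singularValues
    finrank_euclideanSpace_fin finrank_euclideanSpace_fin
  set U := (EuclideanSpace.basisFun (Fin m) 𝕜).toBasis.toMatrix u
  set V := (EuclideanSpace.basisFun (Fin p) 𝕜).toBasis.toMatrix e
  have hU := (EuclideanSpace.basisFun (Fin m) 𝕜).toMatrix_orthonormalBasis_mem_unitary u
  have hV := (EuclideanSpace.basisFun (Fin p) 𝕜).toMatrix_orthonormalBasis_mem_unitary e
  have hD : star U * M * V =
      rectDiagonal (fun j => ((toEuclideanLin M).singularValues j : 𝕜)) := by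
    ext i j
    rw [rectDiagonal, of_apply, ← hT i j, Matrix.mul_assoc]
    simp only [mul_apply, star_apply, Basis.toMatrix_apply,
      OrthonormalBasis.coe_toBasis_repr_apply, EuclideanSpace.basisFun_repr, RCLike.star_def,
      Finset.mul_sum, PiLp.inner_apply, ofLp_toLpLin, toLin'_apply, mulVec, dotProduct,
      RCLike.inner_apply, Finset.sum_mul, U, V]
    exact Finset.sum_congr rfl fun _ _ => Finset.sum_congr rfl fun _ _ => by ring
  refine ⟨U, hU, V, hV, ?_⟩
  rw [← hD, ← Matrix.mul_assoc, ← Matrix.mul_assoc, Unitary.mul_star_self_of_mem hU,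
    Matrix.one_mul, Matrix.mul_assoc, Unitary.mul_star_self_of_mem hV, Matrix.mul_one]

end Matrix

theorem dft_eq_zmod_dft {n : ℕ} [NeZero n] : (dft : (ZMod n → ℂ) → ZMod n → ℂ) = ZMod.dft := by
  ext x k
  refine Finset.sum_congr rfl fun t _ => ?_
  rw [smul_eq_mul, mul_comm, AddChar.map_neg_eq_inv, ZMod.stdAddChar_apply, ZMod.toCircle_apply,
    ← Complex.exp_nat_mul, ← Complex.exp_neg, mul_comm t k]
  congr 2
  ring

section Tensor

variable {n1 n2 n3 n4 : ℕ} [NeZero n3]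

theorem mdft_apply (X : Tensor n1 n2 n3) (i : Fin n1) (j : Fin n2) : mdft X i j = 𝓕 (X i j) := by
  rw [mdft, dft_eq_zmod_dft]

theorem mdft_injective : Function.Injective (mdft : Tensor n1 n2 n3 → Tensor n1 n2 n3) :=
  fun X Y h => funext₂ fun i j => ZMod.dft.injective <| by
    rw [← mdft_apply, ← mdft_apply, h]

theorem mdft_surjective : Function.Surjective (mdft : Tensor n1 n2 n3 → Tensor n1 n2 n3) :=
  fun Y => ⟨fun i j => 𝓕⁻ (Y i j), funext₂ fun i j => by simp [mdft_apply]⟩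

theorem eq_of_fslice_mdft_eq {X Y : Tensor n1 n2 n3}
    (h : ∀ k, fslice (mdft X) k = fslice (mdft Y) k) : X = Y :=
  mdft_injective <| funext₂ fun i j => funext fun k => by
    simpa [fslice] using congrFun₂ (h k) i j

theorem exists_fslice_mdft_eq (F : ZMod n3 → Matrix (Fin n1) (Fin n2) ℂ) :
    ∃ X : Tensor n1 n2 n3, ∀ k, fslice (mdft X) k = F k := by
  obtain ⟨X, hX⟩ := mdft_surjective (fun i j k => F k i j)
  exact ⟨X, fun k => by ext i j; simp [fslice, hX]⟩

theorem fslice_mdft_tProd (A : Tensor n1 n2 n3) (B : Tensor n2 n4 n3) (k : ZMod n3) :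
    fslice (mdft (tProd A B)) k = fslice (mdft A) k * fslice (mdft B) k := by
  ext i j
  simp [fslice, Matrix.mul_apply, mdft_apply, tProd, map_sum, ZMod.dft_cconv]

theorem fslice_mdft_tconj (X : Tensor n1 n2 n3) (k : ZMod n3) :
    fslice (mdft (tconj X)) k = (fslice (mdft X) k)ᴴ := by
  ext i j
  simp only [fslice, Matrix.of_apply, Matrix.conjTranspose_apply, mdft_apply, RCLike.star_def]
  exact congrFun (ZMod.dft_conj_neg (X j i)) k

theorem fslice_mdft_tId (k : ZMod n3) : fslice (mdft (tId n1 n3)) k = 1 := by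
  ext i j
  have : tId n1 n3 i j = Pi.single 0 (if i = j then 1 else 0) := by
    ext t
    by_cases h : t = 0 <;> simp [tId, h]
  simp [fslice, mdft_apply, this, ZMod.dft_single_zero, Matrix.one_apply]

theorem TOrthogonal.of_fslice_mdft_mem_unitary {Q : Tensor n1 n1 n3}
    (h : ∀ k, fslice (mdft Q) k ∈ Matrix.unitaryGroup (Fin n1) ℂ) : TOrthogonal Q := by
  constructor <;> refine eq_of_fslice_mdft_eq fun k => ?_ <;>
    simp only [fslice_mdft_tProd, fslice_mdft_tconj, fslice_mdft_tId,
      ← Matrix.star_eq_conjTranspose]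
  exacts [Unitary.mul_star_self_of_mem (h k), Unitary.star_mul_self_of_mem (h k)]

theorem FDiagonal.of_mdft {S : Tensor n1 n2 n3} (h : FDiagonal (mdft S)) : FDiagonal S := by
  intro i j k hij
  have hS : 𝓕 (S i j) = 𝓕 0 := by
    ext t
    rw [map_zero, ← mdft_apply]
    exact h i j t hij
  exact congrFun (ZMod.dft.injective hS) k

end Tensor

/-- t-SVD: every third-order tensor `X` admits a decomposition
`X = U ∗ S ∗ Vᴴ` with `U`, `V` orthogonal tensors and `S` f-diagonal whose Fourier-domain
frontal slices have nonnegative real diagonal entries. -/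
theorem tsvd_exists {n1 n2 n3 : ℕ} [NeZero n3] (X : Tensor n1 n2 n3) :
    ∃ (U : Tensor n1 n1 n3) (S : Tensor n1 n2 n3) (V : Tensor n2 n2 n3),
      TOrthogonal U ∧ TOrthogonal V ∧ FDiagonal S ∧
      (∀ (i : Fin n1) (j : Fin n2) (k : ZMod n3), (i : ℕ) = (j : ℕ) →
        0 ≤ (mdft S i j k).re ∧ (mdft S i j k).im = 0) ∧
      X = tProd (tProd U S) (tconj V) := by
  choose U' hU' V' hV' hX using fun k => (fslice (mdft X) k).exists_svd
  set σ := fun k => (toEuclideanLin (fslice (mdft X) k)).singularValues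
  obtain ⟨U, hU⟩ := exists_fslice_mdft_eq U'
  obtain ⟨V, hV⟩ := exists_fslice_mdft_eq V'
  obtain ⟨S, hS⟩ := exists_fslice_mdft_eq fun k =>
    rectDiagonal (m := n1) fun j : Fin n2 => (σ k j : ℂ)
  have hS' : ∀ i j k, mdft S i j k = if (i : ℕ) = j then (σ k j : ℂ) else 0 :=
    fun i j k => congrFun₂ (hS k) i j
  refine ⟨U, S, V, .of_fslice_mdft_mem_unitary fun k => hU k ▸ hU' k,
    .of_fslice_mdft_mem_unitary fun k => hV k ▸ hV' k,
    .of_mdft fun i j k hij => by simp [hS', hij],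
    fun i j k hij => by simpa [hS', hij] using LinearMap.singularValues_nonneg _ _,
    eq_of_fslice_mdft_eq fun k => ?_⟩
  rw [fslice_mdft_tProd, fslice_mdft_tProd, fslice_mdft_tconj, hU, hS, hV,
    ← star_eq_conjTranspose]
  exact hX k

end
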